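/- arXiv:2410.00976 — 4 statements merged into one kernel-verified Lean document; each statement's English description precedes it below -/
import Mathlib

section
/- Let f : ℝⁿ → ℝⁿ be continuous, let V : ℝⁿ → ℝ be continuously differentiable, bounded below, and radially unbounded, and let c > 0. Suppose ⟨∇V(x), f(x)⟩ < 0 for every x with V(x) > c. Then the sublevel set M(c) = {x : V(x) ≤ c} is globally attractive: every differentiable curve x : ℝ → ℝⁿ with x'(t) = f(x(t)) for all t ≥ 0 satisfies dist(x(t), M(c)) → 0 as t → ∞, where dist(y, M) = inf_{z ∈ M} ‖y − z‖. -/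
open scoped RealInnerProductSpace

/-- Proposition 2 (asymptotic stability): if `V` is `C¹`, bounded below and radially
unbounded, and its derivative along `f` is strictly negative wherever `V x > c`,
then the sublevel set `M(c) = {x : V x ≤ c}` is globally attractive: every solution
of `ẋ = f(x)` on `[0,∞)` satisfies `dist(x(t), M(c)) → 0` as `t → ∞`. -/
theorem sublevel_set_globally_attractive
    {n : ℕ} (f : EuclideanSpace ℝ (Fin n) → EuclideanSpace ℝ (Fin n))
    (hf : Continuous f)
    (V : EuclideanSpace ℝ (Fin n) → ℝ) (hV : ContDiff ℝ 1 V)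
    (hVbdd : BddBelow (Set.range V))
    (hVrad : ∀ α : ℝ, ∃ r > (0 : ℝ), ∀ x : EuclideanSpace ℝ (Fin n), r < ‖x‖ → α < V x)
    (c : ℝ) (hc : 0 < c)
    (hdiss : ∀ x : EuclideanSpace ℝ (Fin n), c < V x → ⟪gradient V x, f x⟫ < 0)
    (x : ℝ → EuclideanSpace ℝ (Fin n))
    (hsol : ∀ t : ℝ, 0 ≤ t → HasDerivAt x (f (x t)) t) :
    Filter.Tendsto (fun t : ℝ => Metric.infDist (x t) {y | V y ≤ c})
      Filter.atTop (nhds 0) := by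
  set M : Set (EuclideanSpace ℝ (Fin n)) := {y | V y ≤ c} with hMdef
  set g : ℝ → ℝ := fun t => V (x t) with hgdef
  set W : EuclideanSpace ℝ (Fin n) → ℝ := fun y => ⟪gradient V y, f y⟫ with hWdef
  have hVc : Continuous V := hV.continuous
  have hgrad_cont : Continuous fun y => gradient V y := by
    have h : (fun y : EuclideanSpace ℝ (Fin n) => gradient V y)
        = fun y => (InnerProductSpace.toDual ℝ _).symm (fderiv ℝ V y) := rfl
    rw [h]
    exact (LinearIsometryEquiv.continuous _).comp (hV.continuous_fderiv one_ne_zero)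
  have hWcont : Continuous W := hgrad_cont.inner hf
  have hg' : ∀ t : ℝ, 0 ≤ t → HasDerivAt g (W (x t)) t := by
    intro t ht
    have h1 : HasGradientAt V (gradient V (x t)) (x t) :=
      (hV.differentiable one_ne_zero _).hasGradientAt
    have h2 := h1.hasFDerivAt.comp_hasDerivAt t (hsol t ht)
    simp only [InnerProductSpace.toDual_apply_apply] at h2
    exact h2
  have hgc : ∀ t : ℝ, 0 ≤ t → ContinuousAt g t := fun t ht => (hg' t ht).continuousAt
  -- Invariance of sublevel sets {g ≤ d} for d ≥ c
  have hinv : ∀ d : ℝ, c ≤ d → ∀ t₀ : ℝ, 0 ≤ t₀ → g t₀ ≤ d →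
      ∀ t : ℝ, t₀ ≤ t → g t ≤ d := by
    intro d hcd t₀ ht₀ hgt₀ t₁ ht₁
    by_contra hgt1
    push_neg at hgt1
    have hlt : t₀ < t₁ := by
      rcases lt_or_eq_of_le ht₁ with h | h
      · exact h
      · exfalso; rw [h] at hgt₀; linarith
    set S := Set.Icc t₀ t₁ ∩ g ⁻¹' Set.Iic d with hSdef
    have hgcIcc : ContinuousOn g (Set.Icc t₀ t₁) := fun t ht =>
      (hgc t (le_trans ht₀ ht.1)).continuousWithinAt
    have hScl : IsClosed S :=
      hgcIcc.preimage_isClosed_of_isClosed isClosed_Icc isClosed_Iic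
    have hSne : S.Nonempty := ⟨t₀, ⟨le_refl _, le_of_lt hlt⟩, hgt₀⟩
    have hSbdd : BddAbove S := ⟨t₁, fun s hs => hs.1.2⟩
    set s := sSup S with hsdef
    have hsS : s ∈ S := hScl.csSup_mem hSne hSbdd
    have hs0 : 0 ≤ s := le_trans ht₀ hsS.1.1
    have hst1 : s < t₁ := by
      rcases lt_or_eq_of_le hsS.1.2 with h | h
      · exact h
      · exfalso; have := hsS.2; rw [h] at this; simp at this; linarith
    have hgt : ∀ t, s < t → t ≤ t₁ → d < g t := by
      intro t hst htt1
      by_contra h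
      push_neg at h
      have : t ∈ S := ⟨⟨le_trans hsS.1.1 hst.le, htt1⟩, h⟩
      exact absurd (le_csSup hSbdd this) (not_le.mpr hst)
    have hanti : StrictAntiOn g (Set.Icc s t₁) := by
      apply strictAntiOn_of_deriv_neg (convex_Icc s t₁)
      · exact fun t ht => (hgc t (le_trans hs0 ht.1)).continuousWithinAt
      · intro t ht
        rw [interior_Icc] at ht
        rw [(hg' t (le_trans hs0 ht.1.le)).deriv]
        exact hdiss (x t) (lt_of_le_of_lt hcd (hgt t ht.1 ht.2.le))
    have := hanti ⟨le_refl s, hst1.le⟩ ⟨hst1.le, le_refl t₁⟩ hst1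
    have hgs : g s ≤ d := hsS.2
    linarith
  -- Main claim: g eventually drops below c + ε
  have hclaim : ∀ ε : ℝ, 0 < ε → ∃ T : ℝ, 0 ≤ T ∧ ∀ t : ℝ, T ≤ t → g t ≤ c + ε := by
    intro ε hε
    by_cases hex : ∃ t₀ : ℝ, 0 ≤ t₀ ∧ g t₀ ≤ c + ε
    · obtain ⟨t₀, ht₀, h⟩ := hex
      exact ⟨t₀, ht₀, fun t ht => hinv (c + ε) (by linarith) t₀ ht₀ h t ht⟩
    · exfalso
      push_neg at hex
      have hgdiff : ∀ t ∈ interior (Set.Ici (0:ℝ)), DifferentiableAt ℝ g t := by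
        intro t ht; rw [interior_Ici] at ht
        exact (hg' t ht.le).differentiableAt
      have hderivneg : ∀ t ∈ interior (Set.Ici (0:ℝ)), deriv g t < 0 := by
        intro t ht; rw [interior_Ici] at ht
        rw [(hg' t ht.le).deriv]
        exact hdiss (x t) (by linarith [hex t ht.le])
      have hanti : AntitoneOn g (Set.Ici 0) := by
        apply antitoneOn_of_deriv_nonpos (convex_Ici 0)
        · exact fun t ht => (hgc t ht).continuousWithinAt
        · exact fun t ht => (hgdiff t ht).differentiableWithinAt
        · exact fun t ht => (hderivneg t ht).le
      set A := V ⁻¹' Set.Icc (c + ε) (g 0) with hAdef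
      obtain ⟨r, hr, hrball⟩ := hVrad (g 0)
      have hAsub : A ⊆ Metric.closedBall 0 r := by
        intro y hy
        rw [Metric.mem_closedBall, dist_zero_right]
        by_contra h
        push_neg at h
        exact absurd hy.2 (not_le.mpr (hrball y h))
      have hAcl : IsClosed A := isClosed_Icc.preimage hVc
      have hAcomp : IsCompact A :=
        (isCompact_closedBall 0 r).of_isClosed_subset hAcl hAsub
      have hxA : ∀ t : ℝ, 0 ≤ t → x t ∈ A := by
        intro t ht
        exact ⟨(hex t ht).le, hanti (Set.mem_Ici.mpr le_rfl) (Set.mem_Ici.mpr ht) ht⟩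
      have hAne : A.Nonempty := ⟨x 0, hxA 0 le_rfl⟩
      obtain ⟨p, hpA, hpmax⟩ := hAcomp.exists_isMaxOn hAne hWcont.continuousOn
      set m := W p with hmdef
      have hm : m < 0 := hdiss p (by have := hpA.1; simp at this ⊢; linarith)
      -- φ t = g t - m t is antitone on Ici 0
      have hφ : AntitoneOn (fun t => g t - m * t) (Set.Ici 0) := by
        apply antitoneOn_of_deriv_nonpos (convex_Ici 0)
        · exact ContinuousOn.sub (fun t ht => (hgc t ht).continuousWithinAt)
            (continuous_const.mul continuous_id).continuousOn
        · intro t ht; rw [interior_Ici] at ht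
          exact ((hg' t ht.le).sub ((hasDerivAt_id t).const_mul m)).differentiableAt.differentiableWithinAt
        · intro t ht; rw [interior_Ici] at ht
          have hd : HasDerivAt (fun t => g t - m * t) (W (x t) - m * 1) t :=
            (hg' t ht.le).sub ((hasDerivAt_id t).const_mul m)
          rw [hd.deriv]
          have : W (x t) ≤ m := hpmax (hxA t ht.le)
          linarith
      set T := max 1 ((c + ε - g 0) / m + 1) with hTdef
      have hT0 : (0:ℝ) ≤ T := le_trans zero_le_one (le_max_left _ _)
      have h1 : g T - m * T ≤ g 0 - m * 0 :=
        hφ (Set.mem_Ici.mpr le_rfl) (Set.mem_Ici.mpr hT0) hT0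
      have h2 : m * T ≤ m * ((c + ε - g 0) / m + 1) :=
        mul_le_mul_of_nonpos_left (le_max_right _ _) hm.le
      have h3 : m * ((c + ε - g 0) / m) = c + ε - g 0 :=
        mul_div_cancel₀ _ hm.ne
      have h4 := hex T hT0
      have h5 : m * ((c + ε - g 0) / m + 1) = (c + ε - g 0) + m := by
        rw [mul_add, h3, mul_one]
      linarith
  -- Conclude: infDist (x t) M → 0
  rw [Metric.tendsto_atTop]
  intro δ hδ
  set K := V ⁻¹' Set.Iic (c + 1) with hKdef
  obtain ⟨r, hr, hrball⟩ := hVrad (c + 1)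
  have hKsub : K ⊆ Metric.closedBall 0 r := by
    intro y hy
    rw [Metric.mem_closedBall, dist_zero_right]
    by_contra h
    push_neg at h
    exact absurd hy (not_le.mpr (hrball y h))
  have hKcomp : IsCompact K :=
    (isCompact_closedBall 0 r).of_isClosed_subset (isClosed_Iic.preimage hVc) hKsub
  set B := K ∩ {y | δ ≤ Metric.infDist y M} with hBdef
  have hBcomp : IsCompact B :=
    hKcomp.of_isClosed_subset
      ((isClosed_Iic.preimage hVc).inter
        (isClosed_le continuous_const (Metric.continuous_infDist_pt M)))
      Set.inter_subset_left
  by_cases hBne : B.Nonempty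
  · obtain ⟨p, hpB, hpmin⟩ := hBcomp.exists_isMinOn hBne hVc.continuousOn
    have hpM : p ∉ M := by
      intro h
      have h0 : Metric.infDist p M = 0 := Metric.infDist_zero_of_mem h
      have := hpB.2
      rw [Set.mem_setOf_eq, h0] at this
      linarith
    have hpc : c < V p := not_le.mp hpM
    set ε := min ((V p - c) / 2) 1 with hεdef
    have hε : 0 < ε := lt_min (by linarith) one_pos
    obtain ⟨T, hT0, hT⟩ := hclaim ε hε
    refine ⟨T, fun t ht => ?_⟩
    have hgt := hT t ht
    have hK : x t ∈ K := by
      simp only [hKdef, Set.mem_preimage, Set.mem_Iic]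
      have : ε ≤ 1 := min_le_right _ _
      calc V (x t) = g t := rfl
        _ ≤ c + ε := hgt
        _ ≤ c + 1 := by linarith
    have hlt : Metric.infDist (x t) M < δ := by
      by_contra h
      push_neg at h
      have hxB : x t ∈ B := ⟨hK, h⟩
      have := hpmin hxB
      have hε2 : ε ≤ (V p - c) / 2 := min_le_left _ _
      have : V p ≤ g t := this
      linarith
    rw [Real.dist_eq, sub_zero, abs_of_nonneg Metric.infDist_nonneg]
    exact hlt
  · obtain ⟨T, hT0, hT⟩ := hclaim 1 one_pos
    refine ⟨T, fun t ht => ?_⟩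
    have hK : x t ∈ K := by
      simp only [hKdef, Set.mem_preimage, Set.mem_Iic]
      exact hT t ht
    have hlt : Metric.infDist (x t) M < δ := by
      by_contra h
      push_neg at h
      exact hBne ⟨x t, hK, h⟩
    rw [Real.dist_eq, sub_zero, abs_of_nonneg Metric.infDist_nonneg]
    exact hlt
end

section
/- Let f : ℝⁿ → ℝⁿ be continuous, let V : ℝⁿ → ℝ be continuously differentiable, bounded below, and radially unbounded, and let c > 0. Suppose that for every x ∈ ℝⁿ, ⟨∇V(x), f(x)⟩ + V(x) − c ≤ 0. Then the system ẋ = f(x) is dissipative with globally asymptotically stable level set M(c) = {x : V(x) ≤ c}: (i) M(c) is positively invariant, i.e., every solution x with V(x(0)) ≤ c satisfies V(x(t)) ≤ c for all t ≥ 0; and (ii) every solution x defined on [0,∞) satisfies dist(x(t), M(c)) → 0 as t → ∞. -/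
open scoped RealInnerProductSpace
open Filter Metric Real Topology

/-- Theorem 1: if `V` is `C¹`, bounded below and radially unbounded, and the algebraic
condition `⟨∇V(x), f(x)⟩ + V(x) - c ≤ 0` holds everywhere, then `ẋ = f(x)` is
dissipative with globally asymptotically stable level set `M(c) = {x : V x ≤ c}`:
(i) `M(c)` is positively invariant, and (ii) every solution on `[0,∞)` satisfies
`dist(x(t), M(c)) → 0` as `t → ∞`. -/
theorem algebraic_condition_dissipative
    {n : ℕ} (f : EuclideanSpace ℝ (Fin n) → EuclideanSpace ℝ (Fin n))
    (hf : Continuous f)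
    (V : EuclideanSpace ℝ (Fin n) → ℝ) (hV : ContDiff ℝ 1 V)
    (hVbdd : BddBelow (Set.range V))
    (hVrad : ∀ α : ℝ, ∃ r > (0 : ℝ), ∀ x : EuclideanSpace ℝ (Fin n), r < ‖x‖ → α < V x)
    (c : ℝ) (hc : 0 < c)
    (hcond : ∀ x : EuclideanSpace ℝ (Fin n), ⟪gradient V x, f x⟫ + V x - c ≤ 0) :
    ∀ x : ℝ → EuclideanSpace ℝ (Fin n),
      (∀ t : ℝ, 0 ≤ t → HasDerivAt x (f (x t)) t) →
        (V (x 0) ≤ c → ∀ t : ℝ, 0 ≤ t → V (x t) ≤ c) ∧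
        Filter.Tendsto (fun t : ℝ => Metric.infDist (x t) {y | V y ≤ c})
          Filter.atTop (nhds 0) := by
  have hVc : Continuous V := hV.continuous
  -- M is nonempty
  have hMne : ∃ z, V z ≤ c := by
    obtain ⟨r0, hr0, hball⟩ := hVrad (V 0)
    obtain ⟨z, hz, hzmin⟩ := (isCompact_closedBall (0 : EuclideanSpace ℝ (Fin n)) r0).exists_isMinOn
      ⟨0, by simp [hr0.le]⟩ hVc.continuousOn
    have hglob : IsLocalMin V z := by
      have : ∀ y, V z ≤ V y := by
        intro y
        by_cases hy : ‖y‖ ≤ r0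
        · exact hzmin (by simpa [Metric.mem_closedBall, dist_eq_norm] using hy)
        · have := hball y (lt_of_not_ge hy)
          have h0 : V z ≤ V 0 := hzmin (by simp [hr0.le])
          linarith
      exact isMinOn_univ_iff.mpr this |>.isLocalMin (by simp)
    have hgrad : gradient V z = 0 := by
      have hfd : fderiv ℝ V z = 0 := hglob.fderiv_eq_zero
      simp [gradient, hfd]
    have := hcond z
    rw [hgrad] at this
    simp at this
    exact ⟨z, by linarith⟩
  intro x hx
  -- derivative of V ∘ x
  have hWd : ∀ t : ℝ, 0 ≤ t →
      HasDerivAt (fun s => V (x s)) (⟪gradient V (x t), f (x t)⟫) t := by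
    intro t ht
    have hdV : HasFDerivAt V (fderiv ℝ V (x t)) (x t) :=
      (hV.differentiable one_ne_zero).differentiableAt.hasFDerivAt
    have := hdV.comp_hasDerivAt t (hx t ht)
    have hg : HasGradientAt V (gradient V (x t)) (x t) :=
      (hV.differentiable one_ne_zero).differentiableAt.hasGradientAt
    have h2 := hg.hasFDerivAt.comp_hasDerivAt t (hx t ht)
    simp [InnerProductSpace.toDual_apply_apply] at h2 ⊢
    exact h2
  -- decay estimate
  have hdecay : ∀ t : ℝ, 0 ≤ t → V (x t) - c ≤ (V (x 0) - c) * Real.exp (-t) := by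
    have hant : AntitoneOn (fun t => (V (x t) - c) * Real.exp t) (Set.Ici 0) := by
      have hder : ∀ t ∈ Set.Ici (0:ℝ), HasDerivAt (fun s => (V (x s) - c) * Real.exp s)
          ((⟪gradient V (x t), f (x t)⟫ + (V (x t) - c)) * Real.exp t) t := by
        intro t ht
        have h1 : HasDerivAt (fun s => V (x s) - c) (⟪gradient V (x t), f (x t)⟫) t :=
          (hWd t ht).sub_const c
        have := h1.mul (Real.hasDerivAt_exp t)
        exact this.congr_deriv (by ring)
      apply antitoneOn_of_deriv_nonpos (convex_Ici 0)
      · exact fun t ht => ((hder t ht).continuousAt).continuousWithinAt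
      · intro t ht
        rw [interior_Ici] at ht
        exact (hder t (Set.Ioi_subset_Ici_self ht)).differentiableAt.differentiableWithinAt
      · intro t ht
        rw [interior_Ici] at ht
        rw [(hder t (Set.Ioi_subset_Ici_self ht)).deriv]
        have := hcond (x t)
        nlinarith [Real.exp_pos t]
    intro t ht
    have := hant (Set.self_mem_Ici) ht ht
    simp only [Real.exp_zero, mul_one] at this
    have he : (0:ℝ) < Real.exp t := Real.exp_pos t
    rw [Real.exp_neg, ← sub_nonneg]
    have h2 : (V (x 0) - c) * (Real.exp t)⁻¹ - (V (x t) - c)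
        = ((V (x 0) - c) - (V (x t) - c) * Real.exp t) * (Real.exp t)⁻¹ := by
      field_simp
    rw [h2]
    exact mul_nonneg (by linarith) (by positivity)
  constructor
  · intro h0 t ht
    have := hdecay t ht
    nlinarith [Real.exp_pos (-t), Real.exp_le_one_iff.mpr (neg_nonpos.mpr ht)]
  · -- key compactness lemma
    set M : Set (EuclideanSpace ℝ (Fin n)) := {y | V y ≤ c} with hM
    have key : ∀ ε > (0:ℝ), ∃ δ > (0:ℝ), ∀ y, V y ≤ c + δ → Metric.infDist y M < ε := by
      intro ε hε
      by_contra hcon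
      push_neg at hcon
      have hy : ∀ k : ℕ, ∃ y, V y ≤ c + 1/(k+1) ∧ ε ≤ Metric.infDist y M := by
        intro k
        obtain ⟨y, hy1, hy2⟩ := hcon (1/(k+1)) (by positivity)
        exact ⟨y, hy1, hy2⟩
      choose y hy1 hy2 using hy
      obtain ⟨r, hr, hrad⟩ := hVrad (c + 1)
      have hyball : ∀ k, y k ∈ Metric.closedBall (0 : EuclideanSpace ℝ (Fin n)) r := by
        intro k
        simp only [Metric.mem_closedBall, dist_zero_right]
        by_contra hk
        have := hrad (y k) (lt_of_not_ge hk)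
        have h1 : (1:ℝ)/(k+1) ≤ 1 := by
          rw [div_le_one (by positivity)]; linarith [Nat.cast_nonneg (α := ℝ) k]
        linarith [hy1 k]
      obtain ⟨a, _, φ, hφ, hconv⟩ :=
        (isCompact_closedBall (0 : EuclideanSpace ℝ (Fin n)) r).tendsto_subseq hyball
      have hVa : V a ≤ c := by
        have h1 : Tendsto (fun k => V (y (φ k))) atTop (𝓝 (V a)) :=
          (hVc.tendsto a).comp hconv
        have h2 : Tendsto (fun k : ℕ => c + 1/((φ k : ℝ)+1)) atTop (𝓝 c) := by
          have hz : Tendsto (fun k : ℕ => 1/((φ k : ℝ)+1)) atTop (𝓝 0) :=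
            tendsto_one_div_add_atTop_nhds_zero_nat.comp hφ.tendsto_atTop
          simpa using (tendsto_const_nhds (x := c)).add hz
        exact le_of_tendsto_of_tendsto h1 h2 (Filter.Eventually.of_forall fun k => hy1 (φ k))
      have haM : a ∈ M := hVa
      have h4 : Tendsto (fun k => Metric.infDist (y (φ k)) M) atTop (𝓝 (Metric.infDist a M)) :=
        ((Metric.continuous_infDist_pt M).tendsto a).comp hconv
      have h5 : ε ≤ Metric.infDist a M :=
        ge_of_tendsto h4 (Filter.Eventually.of_forall fun k => hy2 (φ k))
      rw [Metric.infDist_zero_of_mem haM] at h5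
      linarith
    -- conclude tendsto
    rw [Metric.tendsto_atTop]
    intro ε hε
    obtain ⟨δ, hδ, hkey⟩ := key ε hε
    set A : ℝ := max (V (x 0) - c) 0 with hA
    have hA0 : 0 ≤ A := le_max_right _ _
    have hexp : Tendsto (fun t : ℝ => A * Real.exp (-t)) atTop (𝓝 0) := by
      simpa using (Real.tendsto_exp_neg_atTop_nhds_zero.const_mul A)
    obtain ⟨T, hT⟩ := (Metric.tendsto_atTop.mp hexp δ hδ)
    refine ⟨max T 0, fun t ht => ?_⟩
    have ht0 : 0 ≤ t := le_trans (le_max_right T 0) ht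
    have htT : T ≤ t := le_trans (le_max_left T 0) ht
    have hb : V (x t) ≤ c + δ := by
      have h1 := hdecay t ht0
      have h2 : (V (x 0) - c) * Real.exp (-t) ≤ A * Real.exp (-t) :=
        mul_le_mul_of_nonneg_right (le_max_left _ _) (Real.exp_pos (-t)).le
      have h3 := hT t htT
      rw [Real.dist_eq, sub_zero, abs_of_nonneg (by positivity)] at h3
      linarith
    have := hkey (x t) hb
    rw [Real.dist_eq, sub_zero, abs_of_nonneg Metric.infDist_nonneg]
    exact this
end

section
/- Let Q be a symmetric positive definite n×n real matrix, x₀ ∈ ℝⁿ, V(x) = ⟨Q(x − x₀), x − x₀⟩, and c > 0. Let f̂ : ℝⁿ → ℝⁿ be any function and define the projected vector field f*(x) = f̂(x) − ∇V(x) · ReLU(⟨∇V(x), f̂(x)⟩ + V(x) − c) / ‖∇V(x)‖² (with the convention that the correction term is 0 when ∇V(x) = 0). Then the system ẋ = f*(x) is dissipative with the bounded positively invariant level set M(c) = {x : V(x) ≤ c}: (i) every solution x of ẋ = f*(x) with V(x(0)) ≤ c satisfies V(x(t)) ≤ c for all t ≥ 0; (ii) every solution defined on [0,∞) satisfies dist(x(t),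 M(c)) → 0 as t → ∞; and (iii) every solution is bounded. -/
open scoped RealInnerProductSpace

/-- Corollary 1 with the paper's quadratic parameterization: for a symmetric positive
definite matrix `Q`, center `x₀`, quadratic Lyapunov function
`V(x) = ⟨Q(x - x₀), x - x₀⟩` with gradient `∇V(x) = 2 Q (x - x₀)`, and level `c > 0`,
the projected vector field
`f*(x) = f̂(x) - ∇V(x) · ReLU(⟨∇V(x), f̂(x)⟩ + V(x) - c) / ‖∇V(x)‖²`
yields a dissipative system with bounded positively invariant level set
`M(c) = {x : V x ≤ c}`: every solution starting in `M(c)` stays in `M(c)`, every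
solution on `[0,∞)` converges to `M(c)` in distance, and every solution is bounded. -/
theorem projected_dynamics_dissipative
    {n : ℕ} (Q : Matrix (Fin n) (Fin n) ℝ) (hQsymm : Q.IsSymm) (hQpos : Q.PosDef)
    (x₀ : EuclideanSpace ℝ (Fin n)) (c : ℝ) (hc : 0 < c)
    (fhat : EuclideanSpace ℝ (Fin n) → EuclideanSpace ℝ (Fin n))
    (V : EuclideanSpace ℝ (Fin n) → ℝ)
    (hV : ∀ x : EuclideanSpace ℝ (Fin n),
      V x = ⟪Matrix.toEuclideanLin Q (x - x₀), x - x₀⟫)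
    (gradV : EuclideanSpace ℝ (Fin n) → EuclideanSpace ℝ (Fin n))
    (hgradV : ∀ x : EuclideanSpace ℝ (Fin n),
      gradV x = (2 : ℝ) • Matrix.toEuclideanLin Q (x - x₀))
    (fstar : EuclideanSpace ℝ (Fin n) → EuclideanSpace ℝ (Fin n))
    (hfstar : ∀ x : EuclideanSpace ℝ (Fin n),
      fstar x = fhat x -
        (max (⟪gradV x, fhat x⟫ + V x - c) 0 / ‖gradV x‖ ^ 2) • gradV x) :
    Bornology.IsBounded {y : EuclideanSpace ℝ (Fin n) | V y ≤ c} ∧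
    ∀ x : ℝ → EuclideanSpace ℝ (Fin n),
      (∀ t : ℝ, 0 ≤ t → HasDerivAt x (fstar (x t)) t) →
        (V (x 0) ≤ c → ∀ t : ℝ, 0 ≤ t → V (x t) ≤ c) ∧
        Filter.Tendsto (fun t : ℝ => Metric.infDist (x t) {y | V y ≤ c})
          Filter.atTop (nhds 0) ∧
        ∃ R : ℝ, 0 < R ∧ ∀ t : ℝ, 0 ≤ t → ‖x t‖ ≤ R := by
  classical
  set A : EuclideanSpace ℝ (Fin n) →ₗ[ℝ] EuclideanSpace ℝ (Fin n) :=
    Matrix.toEuclideanLin Q with hA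
  -- symmetry
  have hAsymm : ∀ u v : EuclideanSpace ℝ (Fin n), ⟪A u, v⟫ = ⟪u, A v⟫ := by
    intro u v
    exact (Matrix.isHermitian_iff_isSymmetric.mp hQpos.1) u v
  -- positivity
  have hApos : ∀ v : EuclideanSpace ℝ (Fin n), v ≠ 0 → 0 < ⟪A v, v⟫ := by
    intro v hv
    rw [hAsymm]
    have hv' : (WithLp.equiv 2 (Fin n → ℝ)) v ≠ 0 := by
      intro h
      apply hv
      simpa using congrArg (WithLp.equiv 2 (Fin n → ℝ)).symm h
    have h1 := hQpos.dotProduct_mulVec_pos hv'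
    have h2 : dotProduct (star ((WithLp.equiv 2 (Fin n → ℝ)) v))
        (Matrix.mulVec Q ((WithLp.equiv 2 (Fin n → ℝ)) v)) = ⟪v, A v⟫ := by
      rw [hA, Matrix.toEuclideanLin_apply, EuclideanSpace.inner_eq_star_dotProduct, dotProduct_comm]
      rfl
    rw [← h2]
    exact h1
  have hAnonneg : ∀ v : EuclideanSpace ℝ (Fin n), 0 ≤ ⟪A v, v⟫ := by
    intro v
    rcases eq_or_ne v 0 with h | h
    · simp [h]
    · exact (hApos v h).le
  -- continuity
  have hAcont : Continuous A := A.continuous_of_finiteDimensional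
  -- uniform lower bound (smallest eigenvalue)
  obtain ⟨μ, hμ, hμle⟩ : ∃ μ > 0,
      ∀ v : EuclideanSpace ℝ (Fin n), μ * ‖v‖ ^ 2 ≤ ⟪A v, v⟫ := by
    by_cases h : ∃ v : EuclideanSpace ℝ (Fin n), v ≠ 0
    · obtain ⟨v₀, hv₀⟩ := h
      have hsne : (Metric.sphere (0 : EuclideanSpace ℝ (Fin n)) 1).Nonempty := by
        refine ⟨‖v₀‖⁻¹ • v₀, ?_⟩
        simp [norm_smul, abs_of_nonneg, inv_mul_cancel₀ (norm_ne_zero_iff.mpr hv₀)]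
      have hcont : ContinuousOn (fun v : EuclideanSpace ℝ (Fin n) => ⟪A v, v⟫)
          (Metric.sphere (0 : EuclideanSpace ℝ (Fin n)) 1) :=
        ((hAcont.inner continuous_id)).continuousOn
      obtain ⟨w, hw, hwmin⟩ :=
        (isCompact_sphere (0 : EuclideanSpace ℝ (Fin n)) 1).exists_isMinOn hsne hcont
      have hw1 : ‖w‖ = 1 := by simpa using hw
      have hwne : w ≠ 0 := by
        intro h; rw [h] at hw1; simp at hw1
      refine ⟨⟪A w, w⟫, hApos w hwne, ?_⟩
      intro v
      rcases eq_or_ne v 0 with h0 | h0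
      · simp [h0]
      · have hvn : ‖v‖ ≠ 0 := norm_ne_zero_iff.mpr h0
        have hmem : ‖v‖⁻¹ • v ∈ Metric.sphere (0 : EuclideanSpace ℝ (Fin n)) 1 := by
          simp [norm_smul, abs_of_nonneg, inv_mul_cancel₀ hvn]
        have hle : ⟪A w, w⟫ ≤ ⟪A (‖v‖⁻¹ • v), ‖v‖⁻¹ • v⟫ := hwmin hmem
        have hval : ⟪A (‖v‖⁻¹ • v), ‖v‖⁻¹ • v⟫ = ‖v‖⁻¹ * ‖v‖⁻¹ * ⟪A v, v⟫ := by
          rw [map_smul, real_inner_smul_left, real_inner_smul_right]; ring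
        rw [hval] at hle
        have h2 : ⟪A w, w⟫ * ‖v‖ ^ 2 ≤ (‖v‖⁻¹ * ‖v‖⁻¹ * ⟪A v, v⟫) * ‖v‖ ^ 2 :=
          mul_le_mul_of_nonneg_right hle (by positivity)
        calc ⟪A w, w⟫ * ‖v‖ ^ 2
            ≤ (‖v‖⁻¹ * ‖v‖⁻¹ * ⟪A v, v⟫) * ‖v‖ ^ 2 := h2
          _ = (‖v‖⁻¹ * ‖v‖) * ((‖v‖⁻¹ * ‖v‖) * ⟪A v, v⟫) := by rw [pow_two]; ring
          _ = ⟪A v, v⟫ := by rw [inv_mul_cancel₀ hvn]; ring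
    · push_neg at h
      refine ⟨1, one_pos, fun v => ?_⟩
      simp [h v]
  have hVnonneg : ∀ y : EuclideanSpace ℝ (Fin n), 0 ≤ V y := by
    intro y; rw [hV]; exact hAnonneg _
  -- norm bound from V
  have hnormV : ∀ y : EuclideanSpace ℝ (Fin n), ‖y - x₀‖ ≤ Real.sqrt (V y / μ) := by
    intro y
    rw [Real.le_sqrt (norm_nonneg _) (div_nonneg (hVnonneg y) hμ.le), le_div_iff₀ hμ]
    calc ‖y - x₀‖ ^ 2 * μ = μ * ‖y - x₀‖ ^ 2 := by ring
      _ ≤ ⟪A (y - x₀), y - x₀⟫ := hμle _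
      _ = V y := (hV y).symm
  -- boundedness of the sublevel set
  have hMb : Bornology.IsBounded {y : EuclideanSpace ℝ (Fin n) | V y ≤ c} := by
    apply (Metric.isBounded_closedBall (x := x₀) (r := Real.sqrt (c / μ))).subset
    intro y hy
    simp only [Set.mem_setOf_eq] at hy
    simp only [Metric.mem_closedBall]
    rw [dist_eq_norm]
    calc ‖y - x₀‖ ≤ Real.sqrt (V y / μ) := hnormV y
      _ ≤ Real.sqrt (c / μ) := Real.sqrt_le_sqrt (by gcongr)
  -- distance bound to the sublevel set
  have hdistb : ∀ y : EuclideanSpace ℝ (Fin n),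
      Metric.infDist y {z : EuclideanSpace ℝ (Fin n) | V z ≤ c} ≤
        (Real.sqrt (max (V y) c) - Real.sqrt c) / Real.sqrt μ := by
    intro y
    by_cases hy : V y ≤ c
    · have hy' : y ∈ {z : EuclideanSpace ℝ (Fin n) | V z ≤ c} := hy
      rw [Metric.infDist_zero_of_mem hy', max_eq_right hy]
      simp
    · push_neg at hy
      have hVy : 0 < V y := lt_trans hc hy
      set s : ℝ := Real.sqrt (c / V y) with hs
      have hs0 : 0 ≤ s := Real.sqrt_nonneg _
      have hs1 : s ≤ 1 := by
        rw [hs, show (1:ℝ) = Real.sqrt 1 by simp]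
        apply Real.sqrt_le_sqrt
        rw [div_le_one hVy]; exact hy.le
      have hssq : s ^ 2 = c / V y := Real.sq_sqrt (by positivity)
      have hzmem : x₀ + s • (y - x₀) ∈ {z : EuclideanSpace ℝ (Fin n) | V z ≤ c} := by
        simp only [Set.mem_setOf_eq]
        have hv : V (x₀ + s • (y - x₀)) = s ^ 2 * V y := by
          rw [hV, add_sub_cancel_left, map_smul, real_inner_smul_left,
            real_inner_smul_right, hV]
          ring
        rw [hv, hssq, div_mul_cancel₀ _ (ne_of_gt hVy)]
      have hsv : s * Real.sqrt (V y) = Real.sqrt c := by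
        rw [hs, ← Real.sqrt_mul (by positivity), div_mul_cancel₀ _ (ne_of_gt hVy)]
      have hdivsqrt : Real.sqrt (V y / μ) = Real.sqrt (V y) / Real.sqrt μ :=
        Real.sqrt_div hVy.le μ
      calc Metric.infDist y {z : EuclideanSpace ℝ (Fin n) | V z ≤ c}
            ≤ dist y (x₀ + s • (y - x₀)) := Metric.infDist_le_dist_of_mem hzmem
        _ = (1 - s) * ‖y - x₀‖ := by
            rw [dist_eq_norm]
            have hyz : y - (x₀ + s • (y - x₀)) = (1 - s) • (y - x₀) := by
              rw [sub_smul, one_smul]; abel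
            rw [hyz, norm_smul, Real.norm_eq_abs, abs_of_nonneg (by linarith)]
        _ ≤ (1 - s) * Real.sqrt (V y / μ) :=
            mul_le_mul_of_nonneg_left (hnormV y) (by linarith)
        _ = (Real.sqrt (V y) - Real.sqrt c) / Real.sqrt μ := by
            rw [hdivsqrt, ← hsv]; ring
        _ = (Real.sqrt (max (V y) c) - Real.sqrt c) / Real.sqrt μ := by
            rw [max_eq_left hy.le]
  refine ⟨hMb, ?_⟩
  intro x hx
  -- derivative of V along a solution
  have hW : ∀ t : ℝ, 0 ≤ t →
      HasDerivAt (fun t => V (x t)) ⟪gradV (x t), fstar (x t)⟫ t := by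
    intro t ht
    have h1 : HasDerivAt (fun t => x t - x₀) (fstar (x t)) t := (hx t ht).sub_const x₀
    have h2 : HasDerivAt (fun t => A (x t - x₀)) (A (fstar (x t))) t := by
      have h2' := (LinearMap.toContinuousLinearMap A).hasFDerivAt.comp_hasDerivAt t h1
      exact h2'
    have h3 := h2.inner ℝ h1
    have heq : (fun t => V (x t)) = fun t => ⟪A (x t - x₀), x t - x₀⟫ := by
      funext u; rw [hV]
    rw [heq]
    refine h3.congr_deriv ?_
    have hflip : ⟪A (fstar (x t)), x t - x₀⟫ = ⟪A (x t - x₀), fstar (x t)⟫ := by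
      rw [hAsymm, real_inner_comm]
    rw [hgradV, real_inner_smul_left, hflip]
    ring
  -- key dissipativity inequality
  have hkey : ∀ z : EuclideanSpace ℝ (Fin n), ⟪gradV z, fstar z⟫ ≤ c - V z := by
    intro z
    rw [hfstar, inner_sub_right, real_inner_smul_right, real_inner_self_eq_norm_sq]
    by_cases hg : gradV z = 0
    · have hAz : A (z - x₀) = 0 := by
        have h1 : (0 : EuclideanSpace ℝ (Fin n)) = (2:ℝ) • (A (z - x₀)) := by
          rw [← hgradV, hg]
        have h2 : (2:ℝ) • (A (z - x₀)) = 0 := h1.symm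
        simpa using (smul_eq_zero.mp h2).resolve_left (by norm_num)
      have hVz : V z = 0 := by rw [hV, hAz]; simp
      rw [hg, hVz]
      simp
      linarith
    · have hn : ‖gradV z‖ ^ 2 ≠ 0 := pow_ne_zero 2 (norm_ne_zero_iff.mpr hg)
      rw [div_mul_cancel₀ _ hn]
      have := le_max_left (⟪gradV z, fhat z⟫ + V z - c) 0
      linarith
  -- Gronwall-type estimate
  have hGr : ∀ t : ℝ, 0 ≤ t → V (x t) - c ≤ (V (x 0) - c) * Real.exp (-t) := by
    have hd : ∀ t : ℝ, 0 ≤ t → HasDerivAt (fun t => (V (x t) - c) * Real.exp t)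
        ((⟪gradV (x t), fstar (x t)⟫ + (V (x t) - c)) * Real.exp t) t := by
      intro t ht
      have h1 : HasDerivAt (fun t => V (x t) - c) ⟪gradV (x t), fstar (x t)⟫ t :=
        (hW t ht).sub_const c
      have := h1.mul (Real.hasDerivAt_exp t)
      refine this.congr_deriv ?_
      ring
    have hanti : AntitoneOn (fun t => (V (x t) - c) * Real.exp t) (Set.Ici 0) := by
      apply antitoneOn_of_deriv_nonpos (convex_Ici 0)
      · intro t ht
        exact ((hd t ht).differentiableAt.continuousAt).continuousWithinAt
      · intro t ht
        rw [interior_Ici] at ht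
        exact ((hd t (le_of_lt ht)).differentiableAt).differentiableWithinAt
      · intro t ht
        rw [interior_Ici] at ht
        rw [(hd t (le_of_lt ht)).deriv]
        apply mul_nonpos_of_nonpos_of_nonneg
        · have := hkey (x t); linarith
        · exact (Real.exp_pos t).le
    intro t ht
    have h := hanti Set.self_mem_Ici ht ht
    simp only [Real.exp_zero, mul_one] at h
    have h2 := mul_le_mul_of_nonneg_right h (Real.exp_pos (-t)).le
    rw [mul_assoc, ← Real.exp_add, add_neg_cancel, Real.exp_zero, mul_one] at h2
    exact h2
  set K : ℝ := |V (x 0) - c| with hK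
  have hKnn : 0 ≤ K := abs_nonneg _
  have hVle : ∀ t : ℝ, 0 ≤ t → V (x t) ≤ c + K * Real.exp (-t) := by
    intro t ht
    have h1 := hGr t ht
    have h2 : (V (x 0) - c) * Real.exp (-t) ≤ K * Real.exp (-t) :=
      mul_le_mul_of_nonneg_right (le_abs_self _) (Real.exp_pos _).le
    linarith
  refine ⟨?_, ?_, ?_⟩
  · -- invariance
    intro h0 t ht
    have h1 := hGr t ht
    have h2 : (V (x 0) - c) * Real.exp (-t) ≤ 0 :=
      mul_nonpos_of_nonpos_of_nonneg (by linarith) (Real.exp_pos _).le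
    linarith
  · -- distance tends to 0
    have hexp : Filter.Tendsto (fun t : ℝ => Real.exp (-t)) Filter.atTop (nhds 0) :=
      Real.tendsto_exp_atBot.comp Filter.tendsto_neg_atTop_atBot
    have htend : Filter.Tendsto (fun t : ℝ => c + K * Real.exp (-t))
        Filter.atTop (nhds c) := by
      have := (hexp.const_mul K).const_add c
      simpa using this
    have hmax : Filter.Tendsto (fun t : ℝ => max (V (x t)) c) Filter.atTop (nhds c) := by
      apply tendsto_of_tendsto_of_tendsto_of_le_of_le' tendsto_const_nhds htend
      · exact Filter.Eventually.of_forall fun t => le_max_right _ _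
      · filter_upwards [Filter.eventually_ge_atTop (0:ℝ)] with t ht
        exact max_le (hVle t ht) (by nlinarith [Real.exp_pos (-t)])
    have hub : Filter.Tendsto
        (fun t : ℝ => (Real.sqrt (max (V (x t)) c) - Real.sqrt c) / Real.sqrt μ)
        Filter.atTop (nhds 0) := by
      have hsq : Filter.Tendsto (fun t : ℝ => Real.sqrt (max (V (x t)) c))
          Filter.atTop (nhds (Real.sqrt c)) :=
        (Real.continuous_sqrt.continuousAt.tendsto).comp hmax
      have := (hsq.sub_const (Real.sqrt c)).div_const (Real.sqrt μ)
      simpa using this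
    exact squeeze_zero (fun t => Metric.infDist_nonneg) (fun t => hdistb (x t)) hub
  · -- boundedness
    refine ⟨‖x₀‖ + Real.sqrt ((c + K) / μ) + 1, by positivity, ?_⟩
    intro t ht
    have h1 : V (x t) ≤ c + K := by
      have h2 := hVle t ht
      have h3 : Real.exp (-t) ≤ 1 := Real.exp_le_one_iff.mpr (by linarith)
      nlinarith
    have h3 : ‖x t - x₀‖ ≤ Real.sqrt ((c + K) / μ) := by
      calc ‖x t - x₀‖ ≤ Real.sqrt (V (x t) / μ) := hnormV _
        _ ≤ Real.sqrt ((c + K) / μ) :=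
            Real.sqrt_le_sqrt (by gcongr)
    calc ‖x t‖ = ‖x t - x₀ + x₀‖ := by rw [sub_add_cancel]
      _ ≤ ‖x t - x₀‖ + ‖x₀‖ := norm_add_le _ _
      _ ≤ ‖x₀‖ + Real.sqrt ((c + K) / μ) + 1 := by linarith
end

section
/- Let f : ℝⁿ → ℝⁿ, let V : ℝⁿ → ℝ be continuously differentiable, and let c > 0. Suppose ⟨∇V(x), f(x)⟩ + V(x) − c ≤ 0 for every x ∈ ℝⁿ. Then along every solution x : ℝ → ℝⁿ of ẋ = f(x) on [0,∞), one has V(x(t)) ≤ max{V(x(0)), c} for all t ≥ 0. -/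
open scoped RealInnerProductSpace

/-- Energy bound along trajectories (from the proof of Corollary 1): under the
algebraic condition `⟨∇V(x), f(x)⟩ + V(x) - c ≤ 0` for all `x`, every solution of
`ẋ = f(x)` on `[0,∞)` satisfies `V(x(t)) ≤ max {V(x(0)), c}` for all `t ≥ 0`. -/
theorem energy_bound_along_trajectories
    {n : ℕ} (f : EuclideanSpace ℝ (Fin n) → EuclideanSpace ℝ (Fin n))
    (V : EuclideanSpace ℝ (Fin n) → ℝ) (hV : ContDiff ℝ 1 V)
    (c : ℝ) (hc : 0 < c)
    (hcond : ∀ x : EuclideanSpace ℝ (Fin n), ⟪gradient V x, f x⟫ + V x - c ≤ 0)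
    (x : ℝ → EuclideanSpace ℝ (Fin n))
    (hsol : ∀ t : ℝ, 0 ≤ t → HasDerivAt x (f (x t)) t) :
    ∀ t : ℝ, 0 ≤ t → V (x t) ≤ max (V (x 0)) c := by
  set g : ℝ → ℝ := fun t => V (x t) with hg
  have hgderiv : ∀ t : ℝ, 0 ≤ t →
      HasDerivAt g ⟪gradient V (x t), f (x t)⟫ t := by
    intro t ht
    have hdiff : DifferentiableAt ℝ V (x t) := (hV.differentiable one_ne_zero).differentiableAt
    have hgrad := hdiff.hasGradientAt.hasFDerivAt
    have := hgrad.comp_hasDerivAt t (hsol t ht)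
    exact this
  set h : ℝ → ℝ := fun t => Real.exp t * (g t - c) with hh
  have hhderiv : ∀ t : ℝ, 0 ≤ t →
      HasDerivAt h (Real.exp t * (⟪gradient V (x t), f (x t)⟫ + g t - c)) t := by
    intro t ht
    have := (Real.hasDerivAt_exp t).mul ((hgderiv t ht).sub_const c)
    convert this using 1
    exacts [rfl, rfl, rfl, by ring]
  have hanti : AntitoneOn h (Set.Ici (0:ℝ)) := by
    apply antitoneOn_of_deriv_nonpos (convex_Ici 0)
    · exact fun t ht => ((hhderiv t ht).continuousAt).continuousWithinAt
    · intro t ht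
      rw [interior_Ici] at ht
      exact ((hhderiv t (le_of_lt ht)).differentiableAt).differentiableWithinAt
    · intro t ht
      rw [interior_Ici] at ht
      rw [(hhderiv t (le_of_lt ht)).deriv]
      have := hcond (x t)
      have he : (0:ℝ) < Real.exp t := Real.exp_pos t
      nlinarith
  intro t ht
  have key := hanti (Set.self_mem_Ici) (Set.mem_Ici.mpr ht) ht
  simp only [hh, Real.exp_zero, one_mul] at key
  have he1 : (1:ℝ) ≤ Real.exp t := Real.one_le_exp ht
  rcases le_or_gt (g t) c with hle | hgt
  · exact le_max_of_le_right hle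
  · have : g t ≤ g 0 := by nlinarith
    exact le_max_of_le_left this
end
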